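/- arXiv:0708.0979 — 5 statements merged into one kernel-verified Lean document; each statement's English description precedes it below -/
import Mathlib

section
/- Let c, w ∈ ℝ³ with w ≠ 0, let a > 0, and define the affine curve γ(s) = c + s·w. Then for every s ∈ ℝ, the ℝ³-valued function F(s) = (⟨γ(s), w⟩ / (√(a² + ‖γ(s)‖²) · (‖w‖²·a² + ‖γ(s) × w‖²))) • (γ(s) × w) is differentiable at s with derivative F'(s) = (γ(s) × w) / (√(a² + ‖γ(s)‖²))³. (This is the explicit antiderivative for the smoothed Biot–Savart integrand on a straight line segment.) -/
noncomputable def cross3 (u v : EuclideanSpace ℝ (Fin 3)) : EuclideanSpace ℝ (Fin 3) :=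
  WithLp.toLp 2 ![u 1 * v 2 - u 2 * v 1, u 2 * v 0 - u 0 * v 2, u 0 * v 1 - u 1 * v 0]

/-!
Along the line `γ t = c + t • w` the cross product `γ t × w = c × w` is constant, so the
function is a scalar multiple of `c × w` and everything reduces to differentiating
`⟪γ, w⟫ / √(a² + ‖γ‖²)`. Its derivative is `(‖w‖² (a² + ‖γ‖²) - ⟪γ, w⟫²) / √(a² + ‖γ‖²)³`, and
by Lagrange's identity the numerator is `‖w‖² a² + ‖γ × w‖²`, precisely the constant factor
in the denominator of the function.
-/

open Real InnerProductSpace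

theorem HasDerivAt.div_sqrt {p q : ℝ → ℝ} {p' q' s : ℝ} (hp : HasDerivAt p p' s)
    (hq : HasDerivAt q q' s) (hqs : 0 < q s) :
    HasDerivAt (fun t => p t / √(q t)) ((p' * q s - p s * q' / 2) / √(q s) ^ 3) s := by
  have hr : 0 < √(q s) := sqrt_pos.2 hqs
  refine (hp.div (hq.sqrt hqs.ne') hr.ne').congr_deriv ?_
  field_simp
  rw [sq_sqrt hqs.le]
  ring

section Line

variable {E : Type*} [NormedAddCommGroup E] [InnerProductSpace ℝ E]

theorem hasDerivAt_inner_line_div_sqrt (c w : E) {a : ℝ} (ha : a ≠ 0) (s : ℝ) :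
    HasDerivAt (fun t : ℝ => ⟪c + t • w, w⟫_ℝ / √(a ^ 2 + ‖c + t • w‖ ^ 2))
      ((‖w‖ ^ 2 * a ^ 2 + (‖c + s • w‖ ^ 2 * ‖w‖ ^ 2 - ⟪c + s • w, w⟫_ℝ ^ 2)) /
        √(a ^ 2 + ‖c + s • w‖ ^ 2) ^ 3) s := by
  have hline : HasDerivAt (fun t : ℝ => c + t • w) w s := by
    simpa using ((hasDerivAt_id s).smul_const w).const_add c
  have hp : HasDerivAt (fun t : ℝ => ⟪c + t • w, w⟫_ℝ) (‖w‖ ^ 2) s := by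
    simpa using hline.inner ℝ (hasDerivAt_const s w)
  have hq := hline.norm_sq.const_add (a ^ 2)
  refine (hp.div_sqrt hq (by positivity)).congr_deriv ?_
  ring

end Line

theorem cross3_add_smul_left_self (c w : EuclideanSpace ℝ (Fin 3)) (t : ℝ) :
    cross3 (c + t • w) w = cross3 c w := by
  ext i
  fin_cases i <;>
    simp only [cross3, PiLp.add_apply, PiLp.smul_apply, smul_eq_mul, Fin.zero_eta, Fin.mk_one,
      Fin.reduceFinMk, Matrix.cons_val_zero, Matrix.cons_val_one, Matrix.cons_val] <;>
    ring

theorem norm_cross3_sq (u v : EuclideanSpace ℝ (Fin 3)) :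
    ‖cross3 u v‖ ^ 2 = ‖u‖ ^ 2 * ‖v‖ ^ 2 - ⟪u, v⟫_ℝ ^ 2 := by
  simp only [EuclideanSpace.norm_sq_eq, PiLp.inner_apply, Fin.sum_univ_three, cross3,
    Real.norm_eq_abs, sq_abs, RCLike.inner_apply, conj_trivial, Matrix.cons_val_zero,
    Matrix.cons_val_one, Matrix.cons_val]
  ring

theorem smoothed_biot_savart_antiderivative
    (c w : EuclideanSpace ℝ (Fin 3)) (hw : w ≠ 0) (a : ℝ) (ha : 0 < a)
    (γ : ℝ → EuclideanSpace ℝ (Fin 3)) (hγ : ∀ s, γ s = c + s • w) (s : ℝ) :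
    HasDerivAt
      (fun t : ℝ =>
        ((inner ℝ (γ t) w : ℝ) /
            (Real.sqrt (a ^ 2 + ‖γ t‖ ^ 2) *
              (‖w‖ ^ 2 * a ^ 2 + ‖cross3 (γ t) w‖ ^ 2))) • cross3 (γ t) w)
      ((Real.sqrt (a ^ 2 + ‖γ s‖ ^ 2) ^ 3)⁻¹ • cross3 (γ s) w) s := by
  obtain rfl : γ = fun t => c + t • w := funext hγ
  have hK : 0 < ‖w‖ ^ 2 * a ^ 2 + ‖cross3 c w‖ ^ 2 := by positivity
  simp only [cross3_add_smul_left_self, ← div_div]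
  refine (((hasDerivAt_inner_line_div_sqrt c w ha.ne' s).div_const _).smul_const
    (cross3 c w)).congr_deriv ?_
  rw [← norm_cross3_sq, cross3_add_smul_left_self]
  field_simp
end

section
/- (Lax pair.) Let γ : ℤ → Im ℍ be a polygon with edge vectors S_i = γ_{i+1} − γ_i, let T : ℤ → ℍ satisfy ‖T_i‖ = 1 for all i, let S̃ : ℤ → ℍ, and let r ∈ ℝ, l > 0. For λ, ρ ∈ ℝ define the quaternionic 2×2 matrices U_i(λ,ρ) = [[λ, −ρ − S_i],[ρ + S_i, λ]], Ũ_i(λ,ρ) = [[λ, −ρ − S̃_i],[ρ + S̃_i, λ]], and V_i(λ,ρ) = [[λ, −ρ + r − l·T_i],[ρ − r + l·T_i, λ]]. Then V_{i+1}(λ,ρ) · U_i(λ,ρ) = Ũ_i(λ,ρ) · V_i(λ,ρ) holds for all i ∈ ℤ and all λ, ρ ∈ ℝ if and only if for all i ∈ ℤ both T_{i+1} · (−r + l·T_i − S_i) = (−r + l·T_i − S_i) · T_i and l·T_{i+1} + S_i = S̃_i + l·T_i. -/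
open Quaternion

/-- The matrix `[[λ, −ρ − S],[ρ + S, λ]]` appearing in the Lax pair. -/
noncomputable def laxMat (S : ℍ[ℝ]) (lam rho : ℝ) : Matrix (Fin 2) (Fin 2) ℍ[ℝ] :=
  !![(lam : ℍ[ℝ]), -(rho : ℍ[ℝ]) - S; (rho : ℍ[ℝ]) + S, (lam : ℍ[ℝ])]

/-!
Each of `U_i`, `Ũ_i`, `V_i` is `laxMat X λ ρ` for a quaternion `X` (namely `S_i`, `S̃_i`,
`-r + l T_i`), and `laxMat A λ ρ * laxMat B λ ρ` depends on `A, B` only through `A + B` and `A B`.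
So the Lax equation for all `λ, ρ` says that `A = -r + l T_{i+1}`, `B = S_i` and `C = S̃_i`,
`D = -r + l T_i` have equal sums and equal products. Equal sums is the closing condition; given it,
equal products reads `A (D - B) = (D - B) D`, and since `-r` is central and `l ≠ 0` this is
`T_{i+1} (D - S_i) = (D - S_i) T_i`.
-/

theorem Quaternion.coe_eq_smul_one (x : ℝ) : (x : ℍ[ℝ]) = x • 1 := by
  rw [← coe_mul_eq_smul, mul_one]

theorem laxMat_mul_laxMat (A B : ℍ[ℝ]) (lam rho : ℝ) :
    laxMat A lam rho * laxMat B lam rho =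
      !![(lam ^ 2 - rho ^ 2 : ℝ) - rho • (A + B) - A * B, -lam • ((2 * rho : ℝ) + (A + B));
        lam • ((2 * rho : ℝ) + (A + B)), (lam ^ 2 - rho ^ 2 : ℝ) - rho • (A + B) - A * B] := by
  rw [laxMat, laxMat, Matrix.mul_fin_two]
  simp only [EmbeddingLike.apply_eq_iff_eq, Matrix.vecCons_inj, and_true, coe_eq_smul_one,
    mul_add, add_mul, mul_sub, sub_mul, neg_mul, mul_neg, smul_mul_assoc, mul_smul_comm,
    one_mul, mul_one]
  refine ⟨⟨?_, ?_⟩, ?_, ?_⟩ <;> module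

theorem laxMat_mul_eq_iff (A B C D : ℍ[ℝ]) :
    (∀ lam rho : ℝ, laxMat A lam rho * laxMat B lam rho = laxMat C lam rho * laxMat D lam rho) ↔
      A * B = C * D ∧ A + B = C + D := by
  refine ⟨fun h => ⟨?_, ?_⟩, fun ⟨hmul, hadd⟩ lam rho => ?_⟩
  · simpa [laxMat_mul_laxMat] using congrFun₂ (h 0 0) 0 0
  · simpa [laxMat_mul_laxMat] using congrFun₂ (h 1 0) 1 0
  · rw [laxMat_mul_laxMat, laxMat_mul_laxMat, hmul, hadd]

theorem mul_eq_mul_iff_of_add_eq_add {R : Type*} [Ring R] {A B C D : R} (h : A + B = C + D) :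
    A * B = C * D ↔ A * (D - B) = (D - B) * D := by
  have hC : C = A + B - D := eq_sub_of_add_eq h.symm
  have hdiff : A * (D - B) - (D - B) * D = C * D - A * B := by
    rw [hC]
    noncomm_ring
  rw [← sub_eq_zero (a := A * (D - B)), hdiff, sub_eq_zero, eq_comm]

theorem add_smul_mul_eq_mul_add_smul_iff {K A : Type*} [Field K] [Ring A] [Algebra K A]
    {c X : A} (hc : Commute c X) (P Q : A) {l : K} (hl : l ≠ 0) :
    (c + l • P) * X = X * (c + l • Q) ↔ P * X = X * Q := by
  rw [add_mul, mul_add, hc.eq, add_right_inj, smul_mul_assoc, mul_smul_comm, smul_right_inj hl]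

theorem lax_pair_characterizes_darboux_general
    (S : ℤ → ℍ[ℝ])
    (T : ℤ → ℍ[ℝ])
    (Stilde : ℤ → ℍ[ℝ]) (r : ℝ) (l : ℝ) (hl : 0 < l) :
    (∀ (i : ℤ) (lam rho : ℝ),
        laxMat (-(r : ℍ[ℝ]) + l • T (i + 1)) lam rho * laxMat (S i) lam rho =
          laxMat (Stilde i) lam rho * laxMat (-(r : ℍ[ℝ]) + l • T i) lam rho) ↔
      (∀ i : ℤ,
        T (i + 1) * (-(r : ℍ[ℝ]) + l • T i - S i) =
            (-(r : ℍ[ℝ]) + l • T i - S i) * T i ∧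
          l • T (i + 1) + S i = Stilde i + l • T i) := by
  refine forall_congr' fun i => ?_
  have hsum : -(r : ℍ[ℝ]) + l • T (i + 1) + S i = Stilde i + (-(r : ℍ[ℝ]) + l • T i) ↔
      l • T (i + 1) + S i = Stilde i + l • T i := by
    rw [add_assoc, add_left_comm (Stilde i), add_right_inj]
  rw [laxMat_mul_eq_iff, hsum]
  refine and_congr_left fun h => ?_
  rw [mul_eq_mul_iff_of_add_eq_add (hsum.2 h),
    add_smul_mul_eq_mul_add_smul_iff (coe_commute r _).neg_left _ _ hl.ne']

theorem lax_pair_characterizes_darboux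
    (γ : ℤ → ℍ[ℝ]) (hγ : ∀ i, (γ i).re = 0)
    (S : ℤ → ℍ[ℝ]) (hS : ∀ i, S i = γ (i + 1) - γ i)
    (T : ℤ → ℍ[ℝ]) (hT : ∀ i, ‖T i‖ = 1)
    (Stilde : ℤ → ℍ[ℝ]) (r : ℝ) (l : ℝ) (hl : 0 < l) :
    (∀ (i : ℤ) (lam rho : ℝ),
        laxMat (-(r : ℍ[ℝ]) + l • T (i + 1)) lam rho * laxMat (S i) lam rho =
          laxMat (Stilde i) lam rho * laxMat (-(r : ℍ[ℝ]) + l • T i) lam rho) ↔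
      (∀ i : ℤ,
        T (i + 1) * (-(r : ℍ[ℝ]) + l • T i - S i) =
            (-(r : ℍ[ℝ]) + l • T i - S i) * T i ∧
          l • T (i + 1) + S i = Stilde i + l • T i) :=
  lax_pair_characterizes_darboux_general S T Stilde r l hl
end

section
/- (Permutability.) Let γ : ℤ → Im ℍ be a polygon with edge vectors S_i = γ_{i+1} − γ_i, let r, ρ ∈ ℝ, l, λ > 0, and let T, T̂ : ℤ → Im ℍ be sequences of purely imaginary unit quaternions such that T_{i+1}·(−r + l·T_i − S_i) = (−r + l·T_i − S_i)·T_i and T̂_{i+1}·(−ρ + λ·T̂_i − S_i) = (−ρ + λ·T̂_i − S_i)·T̂_i for all i (i.e. η = γ + l·T is a Darboux transform of γ with twist parameter r and distance l, and η̂ = γ + λ·T̂ is a Darboux transform of γ with twist parameter ρ and distance λ). Assume (ρ − r + l·T_i)·T̂_i + λ ≠ 0 for all i, and define T̃_i = (λ·T̂_i − ρ + r − l·T_i) · ((ρ − r + l·T_i)·T̂_i + λ)⁻¹. Then for all i: T̃_i is purely imaginary with ‖T̃_i‖ = 1, and T̃_{i+1}·(−ρ + λ·T̃_i − S̃_i)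 = (−ρ + λ·T̃_i − S̃_i)·T̃_i, where S̃_i = η_{i+1} − η_i; that is, η + λ·T̃ is a Darboux transform of η with twist parameter ρ and distance λ. -/
/-!
Put `d_i = (ρ - r + l T_i) T̂_i + λ`. Since `T̂_i² = -1`, the numerator of `T̃_i` equals `d_i T̂_i`,
so `T̃_i = d_i T̂_i d_i⁻¹` is a conjugate of `T̂_i` and hence again a unit imaginary quaternion.
Modulo the two Darboux equations and `T̂_i² = -1`, a computation valid in any real algebra gives
`(-ρ + λ T̃_i - S̃_i) d_i = d_{i+1} (-ρ + λ T̂_i - S_i)`. Thus the new Darboux factor is the old one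
conjugated by `d_{i+1}` on the left and `d_i` on the right, and conjugating the Darboux equation
of `T̂` accordingly yields that of `T̃`.
-/

open Quaternion

theorem SemiconjBy.conj_conj₀ {G₀ : Type*} [GroupWithZero G₀] {a x y c d : G₀}
    (h : SemiconjBy a x y) (hc : c ≠ 0) (hd : d ≠ 0) :
    SemiconjBy (d * a * c⁻¹) (c * x * c⁻¹) (d * y * d⁻¹) := by
  unfold SemiconjBy
  simp only [mul_assoc, inv_mul_cancel_left₀ hc, inv_mul_cancel_left₀ hd]
  rw [← mul_assoc a, h.eq, mul_assoc]

theorem norm_mul_mul_inv {α : Type*} [NormedDivisionRing α] {d : α} (hd : d ≠ 0) (u : α) :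
    ‖d * u * d⁻¹‖ = ‖u‖ := by
  rw [norm_mul, norm_mul, norm_inv, mul_right_comm, mul_inv_cancel₀ (norm_ne_zero_iff.mpr hd),
    one_mul]

namespace Quaternion

theorem re_mul_comm {R : Type*} [CommRing R] (p q : ℍ[R]) : (p * q).re = (q * p).re := by
  simp only [re_mul]
  ring

theorem re_mul_mul_inv {R : Type*} [Field R] [LinearOrder R] [IsStrictOrderedRing R] {d : ℍ[R]}
    (hd : d ≠ 0) (u : ℍ[R]) : (d * u * d⁻¹).re = u.re := by
  rw [re_mul_comm, ← mul_assoc, inv_mul_cancel₀ hd, one_mul]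

theorem mul_self_eq_neg_one_of_re_eq_zero {q : ℍ[ℝ]} (hre : q.re = 0) (hnorm : ‖q‖ = 1) :
    q * q = -1 := by
  rw [← sq, sq_eq_neg_normSq.mpr hre, normSq_eq_norm_mul_self, hnorm, mul_one, coe_one]

end Quaternion

namespace DarbouxPermutability

open algebraMap

section Ring

variable {A : Type*} [Ring A] [Algebra ℝ A] {r rho l lam : ℝ} {t t' u u' s : A}

theorem numerator_eq_denom_mul (hu : u * u = -1) :
    lam • u - (rho : A) + (r : A) - l • t = (((rho : A) - r + l • t) * u + lam) * u := by
  simp only [add_mul, mul_assoc, hu, Algebra.algebraMap_eq_smul_one, smul_mul_assoc, one_mul,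
    mul_neg, mul_one]
  module

theorem factor_mul_denom
    (hT : t' * (-(r : A) + l • t - s) = (-(r : A) + l • t - s) * t)
    (hU : u' * (-(rho : A) + lam • u - s) = (-(rho : A) + lam • u - s) * u)
    (hu : u * u = -1) :
    (-(rho : A) - (s + l • t' - l • t)) * (((rho : A) - r + l • t) * u + lam) +
        lam • ((((rho : A) - r + l • t) * u + lam) * u) =
      (((rho : A) - r + l • t') * u' + lam) * (-(rho : A) + lam • u - s) := by
  have defects :
      (-(rho : A) - (s + l • t' - l • t)) * (((rho : A) - r + l • t) * u + lam) +
          lam • ((((rho : A) - r + l • t) * u + lam) * u) -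
        (((rho : A) - r + l • t') * u' + lam) * (-(rho : A) + lam • u - s) =
      -(l • ((t' * (-(r : A) + l • t - s) - (-(r : A) + l • t - s) * t) * u)) -
        ((rho : A) - r + l • t') *
          (u' * (-(rho : A) + lam • u - s) - (-(rho : A) + lam • u - s) * u) +
        (lam * l) • ((t - t') * (u * u + 1)) := by
    simp only [Algebra.algebraMap_eq_smul_one]
    noncomm_ring
    module
  rw [← sub_eq_zero, defects, hT, hU, hu]
  simp

end Ring

variable {A : Type*} [DivisionRing A] [Algebra ℝ A] {r rho l lam : ℝ} {t t' u u' s : A}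

theorem factor_eq_conj
    (hT : t' * (-(r : A) + l • t - s) = (-(r : A) + l • t - s) * t)
    (hU : u' * (-(rho : A) + lam • u - s) = (-(rho : A) + lam • u - s) * u)
    (hu : u * u = -1) (hd : ((rho : A) - r + l • t) * u + lam ≠ 0) :
    -(rho : A) +
        lam • ((((rho : A) - r + l • t) * u + lam) * u * (((rho : A) - r + l • t) * u + lam)⁻¹) -
        (s + l • t' - l • t) =
      (((rho : A) - r + l • t') * u' + lam) * (-(rho : A) + lam • u - s) *
        (((rho : A) - r + l • t) * u + lam)⁻¹ := by
  rw [eq_mul_inv_iff_mul_eq₀ hd, ← factor_mul_denom hT hU hu]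
  generalize ((rho : A) - r + l • t) * u + lam = d at hd ⊢
  simp only [sub_mul, add_mul, smul_mul_assoc, inv_mul_cancel_right₀ hd]
  abel

theorem conj_mul_factor
    (hT : t' * (-(r : A) + l • t - s) = (-(r : A) + l • t - s) * t)
    (hU : u' * (-(rho : A) + lam • u - s) = (-(rho : A) + lam • u - s) * u)
    (hu : u * u = -1) (hd : ((rho : A) - r + l • t) * u + lam ≠ 0)
    (hd' : ((rho : A) - r + l • t') * u' + lam ≠ 0) :
    (((rho : A) - r + l • t') * u' + lam) * u' * (((rho : A) - r + l • t') * u' + lam)⁻¹ *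
        (-(rho : A) +
          lam • ((((rho : A) - r + l • t) * u + lam) * u * (((rho : A) - r + l • t) * u + lam)⁻¹) -
          (s + l • t' - l • t)) =
      (-(rho : A) +
          lam • ((((rho : A) - r + l • t) * u + lam) * u * (((rho : A) - r + l • t) * u + lam)⁻¹) -
          (s + l • t' - l • t)) *
        ((((rho : A) - r + l • t) * u + lam) * u * (((rho : A) - r + l • t) * u + lam)⁻¹) := by
  rw [factor_eq_conj hT hU hu hd]
  exact (SemiconjBy.conj_conj₀ hU.symm hd hd').eq.symm

end DarbouxPermutability

open DarbouxPermutability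

theorem darboux_permutability_general
    (γ : ℤ → ℍ[ℝ])
    (S : ℤ → ℍ[ℝ]) (hS : ∀ i, S i = γ (i + 1) - γ i)
    (r rho : ℝ) (l lam : ℝ)
    (T That : ℤ → ℍ[ℝ])
    (hThatim : ∀ i, (That i).re = 0) (hThatnorm : ∀ i, ‖That i‖ = 1)
    (hTdarboux : ∀ i,
      T (i + 1) * (-(r : ℍ[ℝ]) + l • T i - S i) =
        (-(r : ℍ[ℝ]) + l • T i - S i) * T i)
    (hThatdarboux : ∀ i,
      That (i + 1) * (-(rho : ℍ[ℝ]) + lam • That i - S i) =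
        (-(rho : ℍ[ℝ]) + lam • That i - S i) * That i)
    (hden : ∀ i, ((rho : ℍ[ℝ]) - (r : ℍ[ℝ]) + l • T i) * That i + (lam : ℍ[ℝ]) ≠ 0)
    (Ttilde : ℤ → ℍ[ℝ])
    (hTtilde : ∀ i,
      Ttilde i =
        (lam • That i - (rho : ℍ[ℝ]) + (r : ℍ[ℝ]) - l • T i) *
          (((rho : ℍ[ℝ]) - (r : ℍ[ℝ]) + l • T i) * That i + (lam : ℍ[ℝ]))⁻¹)
    (η : ℤ → ℍ[ℝ]) (hη : ∀ i, η i = γ i + l • T i)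
    (Stilde : ℤ → ℍ[ℝ]) (hStilde : ∀ i, Stilde i = η (i + 1) - η i) :
    ∀ i : ℤ,
      (Ttilde i).re = 0 ∧ ‖Ttilde i‖ = 1 ∧
        Ttilde (i + 1) * (-(rho : ℍ[ℝ]) + lam • Ttilde i - Stilde i) =
          (-(rho : ℍ[ℝ]) + lam • Ttilde i - Stilde i) * Ttilde i := by
  have hsq (j : ℤ) : That j * That j = -1 :=
    mul_self_eq_neg_one_of_re_eq_zero (hThatim j) (hThatnorm j)
  have hconj (j : ℤ) : Ttilde j = (((rho : ℍ[ℝ]) - r + l • T j) * That j + lam) * That j *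
      (((rho : ℍ[ℝ]) - r + l • T j) * That j + lam)⁻¹ := by
    rw [hTtilde]
    congr 1
    exact numerator_eq_denom_mul (hsq j)
  intro i
  have hStilde_eq : Stilde i = S i + l • T (i + 1) - l • T i := by
    rw [hStilde, hη, hη, hS]
    abel
  refine ⟨?_, ?_, ?_⟩
  · rw [hconj, re_mul_mul_inv (hden i), hThatim]
  · rw [hconj, norm_mul_mul_inv (hden i), hThatnorm]
  · rw [hStilde_eq, hconj i, hconj (i + 1)]
    exact conj_mul_factor (hTdarboux i) (hThatdarboux i) (hsq i) (hden i) (hden (i + 1))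

theorem darboux_permutability
    (γ : ℤ → ℍ[ℝ]) (hγ : ∀ i, (γ i).re = 0)
    (S : ℤ → ℍ[ℝ]) (hS : ∀ i, S i = γ (i + 1) - γ i)
    (r rho : ℝ) (l lam : ℝ) (hl : 0 < l) (hlam : 0 < lam)
    (T That : ℤ → ℍ[ℝ])
    (hTim : ∀ i, (T i).re = 0) (hTnorm : ∀ i, ‖T i‖ = 1)
    (hThatim : ∀ i, (That i).re = 0) (hThatnorm : ∀ i, ‖That i‖ = 1)
    (hTdarboux : ∀ i,
      T (i + 1) * (-(r : ℍ[ℝ]) + l • T i - S i) =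
        (-(r : ℍ[ℝ]) + l • T i - S i) * T i)
    (hThatdarboux : ∀ i,
      That (i + 1) * (-(rho : ℍ[ℝ]) + lam • That i - S i) =
        (-(rho : ℍ[ℝ]) + lam • That i - S i) * That i)
    (hden : ∀ i, ((rho : ℍ[ℝ]) - (r : ℍ[ℝ]) + l • T i) * That i + (lam : ℍ[ℝ]) ≠ 0)
    (Ttilde : ℤ → ℍ[ℝ])
    (hTtilde : ∀ i,
      Ttilde i =
        (lam • That i - (rho : ℍ[ℝ]) + (r : ℍ[ℝ]) - l • T i) *
          (((rho : ℍ[ℝ]) - (r : ℍ[ℝ]) + l • T i) * That i + (lam : ℍ[ℝ]))⁻¹)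
    (η : ℤ → ℍ[ℝ]) (hη : ∀ i, η i = γ i + l • T i)
    (Stilde : ℤ → ℍ[ℝ]) (hStilde : ∀ i, Stilde i = η (i + 1) - η i) :
    ∀ i : ℤ,
      (Ttilde i).re = 0 ∧ ‖Ttilde i‖ = 1 ∧
        Ttilde (i + 1) * (-(rho : ℍ[ℝ]) + lam • Ttilde i - Stilde i) =
          (-(rho : ℍ[ℝ]) + lam • Ttilde i - Stilde i) * Ttilde i :=
  darboux_permutability_general γ S hS r rho l lam T That hThatim hThatnorm hTdarboux hThatdarboux
    hden Ttilde hTtilde η hη Stilde hStilde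
end

section
/- (Conjugation of the monodromy.) Let n ≥ 1, let γ : ℤ → Im ℍ be a closed polygon of period n (γ_{i+n} = γ_i for all i) with edge vectors S_i = γ_{i+1} − γ_i, let r ∈ ℝ, l > 0, and let T : ℤ → Im ℍ be n-periodic with ‖T_i‖ = 1 satisfying T_{i+1}·(−r + l·T_i − S_i) = (−r + l·T_i − S_i)·T_i for all i, so that η = γ + l·T is a closed Darboux transform of γ with edge vectors S̃_i = η_{i+1} − η_i. For λ, ρ ∈ ℝ define U_i(λ,ρ) = [[λ, −ρ − S_i],[ρ + S_i, λ]], Ũ_i(λ,ρ) = [[λ, −ρ − S̃_i],[ρ + S̃_i, λ]], V_i(λ,ρ) = [[λ, −ρ + r − l·T_i],[ρ − r + l·T_i, λ]], and the monodromy matrices H_{λ,ρ} = U_{n−1}(λ,ρ)⋯U_1(λ,ρ)·U_0(λ,ρ) and H^η_{λ,ρ} = Ũ_{n−1}(λ,ρ)⋯Ũ_1(λ,ρ)·Ũ_0(λ,ρ). Then for all λ, ρ ∈ ℝ: H^η_{λ,ρ} · V_0(λ,ρ) = V_0(λ,ρ) · H_{λ,ρ}. -/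
/-!
With `Vᵢ = -r + l Tᵢ`, since `η = γ + l T` we have `S̃ᵢ + Vᵢ = Sᵢ + Vᵢ₊₁`, and the
Darboux condition `Tᵢ₊₁ (Vᵢ - Sᵢ) = (Vᵢ - Sᵢ) Tᵢ` turns this into the factorisation
`S̃ᵢ Vᵢ = Vᵢ₊₁ Sᵢ`. A product of two Lax matrices `!![λ, -(ρ + X); ρ + X, λ]` depends only on the
sum and the product of the two quaternions, so `Ũᵢ Vᵢ = Vᵢ₊₁ Uᵢ`; telescoping over one period and
`Vₙ = V₀` yields the conjugation.
-/

open Quaternion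

/-- The ordered product `A_{k−1} ⋯ A_1 · A_0` of a sequence of matrices. -/
noncomputable def ordProd (A : ℕ → Matrix (Fin 2) (Fin 2) ℍ[ℝ]) :
    ℕ → Matrix (Fin 2) (Fin 2) ℍ[ℝ]
  | 0 => 1
  | k + 1 => A k * ordProd A k

theorem Matrix.rot_mul_rot_eq {R : Type*} [Ring R] {a P Q P' Q' : R}
    (hP : Commute a P) (hP' : Commute a P') (hsum : P + Q = P' + Q') (hprod : P * Q = P' * Q') :
    !![a, -P; P, a] * !![a, -Q; Q, a] = !![a, -P'; P', a] * !![a, -Q'; Q', a] := by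
  simp only [Matrix.mul_fin_two, neg_mul, mul_neg, ← hP.eq, ← hP'.eq, ← mul_add, ← neg_add,
    add_comm (a * Q), add_comm (a * Q'), hprod, hsum]

theorem laxMat_eq_rot (S : ℍ[ℝ]) (lam rho : ℝ) :
    laxMat S lam rho = !![(lam : ℍ[ℝ]), -((rho : ℍ[ℝ]) + S); (rho : ℍ[ℝ]) + S, (lam : ℍ[ℝ])] := by
  rw [laxMat, neg_add']

theorem laxMat_mul_laxMat_eq {S₁ S₂ S₃ S₄ : ℍ[ℝ]} (hsum : S₁ + S₂ = S₃ + S₄)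
    (hprod : S₁ * S₂ = S₃ * S₄) (lam rho : ℝ) :
    laxMat S₁ lam rho * laxMat S₂ lam rho = laxMat S₃ lam rho * laxMat S₄ lam rho := by
  have expand : ∀ X Y : ℍ[ℝ], ((rho : ℍ[ℝ]) + X) * (rho + Y) = rho * rho + rho * (X + Y) + X * Y :=
    fun X Y => by
      rw [add_mul, mul_add, mul_add, mul_add, ← Quaternion.coe_commutes rho X]; abel
  simp only [laxMat_eq_rot]
  refine Matrix.rot_mul_rot_eq (Quaternion.coe_commute _ _) (Quaternion.coe_commute _ _) ?_ ?_
  · rw [add_add_add_comm, hsum, add_add_add_comm]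
  · rw [expand, expand, hsum, hprod]

theorem mul_eq_mul_of_add_eq_of_mul_sub {R : Type*} [Ring R] {S₁ S₂ S₃ S₄ : R}
    (hsum : S₁ + S₂ = S₃ + S₄) (h : S₄ * (S₂ - S₃) = (S₂ - S₃) * S₂) : S₁ * S₂ = S₄ * S₃ := by
  obtain rfl : S₁ = S₃ + S₄ - S₂ := eq_sub_of_add_eq hsum
  calc (S₃ + S₄ - S₂) * S₂ = S₄ * S₂ - (S₂ - S₃) * S₂ := by noncomm_ring
    _ = S₄ * S₃ := by rw [← h]; noncomm_ring

theorem ordProd_mul_eq_mul_ordProd {A B V : ℕ → Matrix (Fin 2) (Fin 2) ℍ[ℝ]}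
    (h : ∀ k, A k * V k = V (k + 1) * B k) (k : ℕ) :
    ordProd A k * V 0 = V k * ordProd B k := by
  induction k with
  | zero => simp [ordProd]
  | succ k ih => rw [ordProd, ordProd, mul_assoc, ih, ← mul_assoc, h, mul_assoc]

theorem monodromy_conjugation_general
    (n : ℕ)
    (γ : ℤ → ℍ[ℝ])
    (S : ℤ → ℍ[ℝ]) (hS : ∀ i, S i = γ (i + 1) - γ i)
    (r : ℝ) (l : ℝ)
    (T : ℤ → ℍ[ℝ])
    (hTper : ∀ i, T (i + n) = T i)
    (hTdarboux : ∀ i,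
      T (i + 1) * (-(r : ℍ[ℝ]) + l • T i - S i) =
        (-(r : ℍ[ℝ]) + l • T i - S i) * T i)
    (η : ℤ → ℍ[ℝ]) (hη : ∀ i, η i = γ i + l • T i)
    (Stilde : ℤ → ℍ[ℝ]) (hStilde : ∀ i, Stilde i = η (i + 1) - η i) :
    ∀ lam rho : ℝ,
      ordProd (fun k => laxMat (Stilde (k : ℤ)) lam rho) n *
          laxMat (-(r : ℍ[ℝ]) + l • T 0) lam rho =
        laxMat (-(r : ℍ[ℝ]) + l • T 0) lam rho *
          ordProd (fun k => laxMat (S (k : ℤ)) lam rho) n := by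
  intro lam rho
  set V : ℤ → ℍ[ℝ] := fun i => -(r : ℍ[ℝ]) + l • T i
  have hsum (i : ℤ) : Stilde i + V i = S i + V (i + 1) := by
    simp only [V, hStilde, hη, hS]; module
  have hcomm (i : ℤ) : V (i + 1) * (V i - S i) = (V i - S i) * V i := by
    simp only [V, add_mul, mul_add, smul_mul_assoc, mul_smul_comm, hTdarboux, neg_mul, mul_neg,
      Quaternion.coe_commutes]
  have step (k : ℕ) : laxMat (Stilde k) lam rho * laxMat (V k) lam rho =
      laxMat (V (k + 1 : ℕ)) lam rho * laxMat (S k) lam rho := by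
    push_cast
    exact laxMat_mul_laxMat_eq ((hsum k).trans (add_comm _ _))
      (mul_eq_mul_of_add_eq_of_mul_sub (hsum k) (hcomm k)) _ _
  have hTn : T n = T 0 := by simpa using hTper 0
  simpa [V, hTn] using ordProd_mul_eq_mul_ordProd step n

theorem monodromy_conjugation
    (n : ℕ) (hn : 1 ≤ n)
    (γ : ℤ → ℍ[ℝ]) (hγ : ∀ i, (γ i).re = 0)
    (hγper : ∀ i, γ (i + n) = γ i)
    (S : ℤ → ℍ[ℝ]) (hS : ∀ i, S i = γ (i + 1) - γ i)
    (r : ℝ) (l : ℝ) (hl : 0 < l)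
    (T : ℤ → ℍ[ℝ]) (hTim : ∀ i, (T i).re = 0) (hTnorm : ∀ i, ‖T i‖ = 1)
    (hTper : ∀ i, T (i + n) = T i)
    (hTdarboux : ∀ i,
      T (i + 1) * (-(r : ℍ[ℝ]) + l • T i - S i) =
        (-(r : ℍ[ℝ]) + l • T i - S i) * T i)
    (η : ℤ → ℍ[ℝ]) (hη : ∀ i, η i = γ i + l • T i)
    (Stilde : ℤ → ℍ[ℝ]) (hStilde : ∀ i, Stilde i = η (i + 1) - η i) :
    ∀ lam rho : ℝ,
      ordProd (fun k => laxMat (Stilde (k : ℤ)) lam rho) n *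
          laxMat (-(r : ℍ[ℝ]) + l • T 0) lam rho =
        laxMat (-(r : ℍ[ℝ]) + l • T 0) lam rho *
          ordProd (fun k => laxMat (S (k : ℤ)) lam rho) n :=
  monodromy_conjugation_general n γ S hS r l T hTper hTdarboux η hη Stilde hStilde
end

section
/- If η : ℤ → Im ℍ is a Darboux transform of γ : ℤ → Im ℍ with twist parameter r ∈ ℝ and distance l > 0, then corresponding edges of γ and η have the same length: ‖η_{i+1} − η_i‖ = ‖γ_{i+1} − γ_i‖ for all i ∈ ℤ. -/
open Quaternion

/-!
Write `E = η_{i+1} - η_i` and `S = γ_{i+1} - γ_i`. With `a = -r + l T_i - S` one has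
`S = l T_i - r - a` and `E = l T_{i+1} - r - a`, so the Darboux condition `T_{i+1} a = a T_i`
gives `E a = a S`. When `a ≠ 0`, multiplicativity of the quaternion norm yields `‖E‖ = ‖S‖`.
When `a = 0`, taking real parts forces `r = 0`, and then `E = l T_{i+1}`, `S = l T_i` both
have norm `l`.
-/

theorem sub_sub_mul_eq_mul_sub_sub {R : Type*} [Ring R] {x y a c : R}
    (h : y * a = a * x) (hc : Commute c a) : (y - c - a) * a = a * (x - c - a) := by
  simp only [sub_mul, mul_sub, h, hc.eq]

theorem norm_eq_of_mul_eq_mul {K : Type*} [NormedDivisionRing K] {a x y : K}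
    (ha : a ≠ 0) (h : x * a = a * y) : ‖x‖ = ‖y‖ := by
  have hn := congrArg norm h
  rw [norm_mul, norm_mul, mul_comm] at hn
  exact mul_left_cancel₀ (norm_ne_zero_iff.mpr ha) hn

theorem darboux_preserves_edge_lengths_general
    (γ η : ℤ → ℍ[ℝ]) (hγ : ∀ i, (γ i).re = 0)
    (r : ℝ) (l : ℝ) (hl : 0 < l)
    (S : ℤ → ℍ[ℝ]) (hS : ∀ i, S i = γ (i + 1) - γ i)
    (T : ℤ → ℍ[ℝ]) (hT : ∀ i, T i = l⁻¹ • (η i - γ i))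
    (hTim : ∀ i, (T i).re = 0) (hTnorm : ∀ i, ‖T i‖ = 1)
    (hTdarboux : ∀ i,
      T (i + 1) * (-(r : ℍ[ℝ]) + l • T i - S i) =
        (-(r : ℍ[ℝ]) + l • T i - S i) * T i) :
    ∀ i : ℤ, ‖η (i + 1) - η i‖ = ‖γ (i + 1) - γ i‖ := by
  intro i
  have hη : ∀ j, η j = γ j + l • T j := fun j => by
    rw [hT j, smul_smul, mul_inv_cancel₀ hl.ne', one_smul, add_sub_cancel]
  set a : ℍ[ℝ] := -(r : ℍ[ℝ]) + l • T i - S i with ha_def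
  have hE : η (i + 1) - η i = l • T (i + 1) - r - a := by
    rw [ha_def, hη, hη, hS]; abel
  have hSa : γ (i + 1) - γ i = l • T i - r - a := by
    rw [ha_def, hS]; abel
  rw [hE, hSa]
  rcases eq_or_ne a 0 with ha | ha
  · have hr : r = 0 := by simpa [ha_def, hS, hγ, hTim] using congrArg (·.re) ha
    simp [ha, hr, norm_smul, hTnorm]
  · refine norm_eq_of_mul_eq_mul ha (sub_sub_mul_eq_mul_sub_sub ?_ (coe_commute r a))
    rw [smul_mul_assoc, mul_smul_comm, hTdarboux]

theorem darboux_preserves_edge_lengths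
    (γ η : ℤ → ℍ[ℝ]) (hγ : ∀ i, (γ i).re = 0) (hη : ∀ i, (η i).re = 0)
    (r : ℝ) (l : ℝ) (hl : 0 < l)
    (S : ℤ → ℍ[ℝ]) (hS : ∀ i, S i = γ (i + 1) - γ i)
    (T : ℤ → ℍ[ℝ]) (hT : ∀ i, T i = l⁻¹ • (η i - γ i))
    (hTim : ∀ i, (T i).re = 0) (hTnorm : ∀ i, ‖T i‖ = 1)
    (hTdarboux : ∀ i,
      T (i + 1) * (-(r : ℍ[ℝ]) + l • T i - S i) =
        (-(r : ℍ[ℝ]) + l • T i - S i) * T i) :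
    ∀ i : ℤ, ‖η (i + 1) - η i‖ = ‖γ (i + 1) - γ i‖ :=
  darboux_preserves_edge_lengths_general γ η hγ r l hl S hS T hT hTim hTnorm hTdarboux
end
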